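/- arXiv:1502.03422 — 3 statements merged into one kernel-verified Lean document; each statement's English description precedes it below -/
import Mathlib

section
/- Let Φ be a Young's function satisfying the ∇' condition globally, i.e., there exists b > 0 such that Φ(bxy) ≥ Φ(x)Φ(y) for all x, y ≥ 0. Then its complementary function Φ* satisfies the Δ' condition (up to a constant): there exists c > 0 with Φ*(xy) ≤ c·Φ*(x)·Φ*(y) for x,y in the relevant range. -/
/-- A Young's function: continuous, convex, even, vanishing only at `0`,
with `Φ x / x → ∞` as `x → ∞`. -/
def IsYoung (Φ : ℝ → ℝ) : Prop :=
  Continuous Φ ∧ ConvexOn ℝ Set.univ Φ ∧ (∀ x, Φ x = 0 ↔ x = 0) ∧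
    (∀ x, Φ (-x) = Φ x) ∧ Filter.Tendsto (fun x => Φ x / x) Filter.atTop Filter.atTop

/-- The complementary Young's function `Φ*(y) = sup { x·|y| − Φ(x) : x ≥ 0 }`. -/
noncomputable def complYoung (Φ : ℝ → ℝ) (y : ℝ) : ℝ :=
  sSup ((fun x => x * |y| - Φ x) '' Set.Ici (0 : ℝ))

/-!
For `u, v > 0` write `A = Φ*(u)`, `B = Φ*(v)`. The points `s = 2A/u` and `r = 2B/v` satisfy
`Φ(s) ≥ su - A = A` and `Φ(r) ≥ B`, so applying `∇'` twice gives `Φ(t) ≥ A·B·Φ(w)` for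
`t = b²·s·r·w`. Since `t·uv = 4b²·A·B·w`, this yields
`t·uv - Φ(t) ≤ A·B·(4b²·w - Φ(w)) ≤ A·B·Φ*(4b²)`, i.e. `Φ*(uv) ≤ Φ*(4b²)·Φ*(u)·Φ*(v)`.
The division by `A` and `B` needs `Φ*(u) > 0`: otherwise `Φ(x) ≥ ux` for all `x ≥ 0`, and `∇'`
then bounds `Φ` linearly, against `Φ(x)/x → ∞`.
-/

open Filter

def NablaPrime (Φ : ℝ → ℝ) (b : ℝ) : Prop :=
  ∀ x y : ℝ, 0 ≤ x → 0 ≤ y → Φ x * Φ y ≤ Φ (b * x * y)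

section

variable {Φ : ℝ → ℝ} {b : ℝ}

theorem complYoung_le {y C : ℝ} (h : ∀ x, 0 ≤ x → x * |y| - Φ x ≤ C) : complYoung Φ y ≤ C :=
  csSup_le ⟨_, 0, Set.self_mem_Ici, rfl⟩ (by rintro _ ⟨x, hx, rfl⟩; exact h x hx)

namespace NablaPrime

theorem mul_mul_le (hN : NablaPrime Φ b) (hb : 0 ≤ b) (hΦ : ∀ x, 0 ≤ Φ x) {x y z : ℝ} (hx : 0 ≤ x)
    (hy : 0 ≤ y) (hz : 0 ≤ z) : Φ x * Φ y * Φ z ≤ Φ (b ^ 2 * x * y * z) :=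
  calc Φ x * Φ y * Φ z ≤ Φ (b * x * y) * Φ z := mul_le_mul_of_nonneg_right (hN x y hx hy) (hΦ z)
    _ ≤ Φ (b * (b * x * y) * z) := hN _ z (by positivity) hz
    _ = Φ (b ^ 2 * x * y * z) := by ring_nf

theorem mul_apply_le_of_forall_mul_le (hN : NablaPrime Φ b) (hb : 0 < b) (hΦ : ∀ x, 0 ≤ Φ x) {u : ℝ}
    (hlin : ∀ x, 0 ≤ x → u * x ≤ Φ x) {y : ℝ} (hy : 0 < y) : u * Φ y ≤ b * Φ 1 * y := by
  have hby : 0 < b * y := by positivity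
  have h := le_trans (mul_le_mul_of_nonneg_right (hlin _ (inv_pos.2 hby).le) (hΦ y))
    (hN (b * y)⁻¹ y (inv_pos.2 hby).le hy.le)
  rw [show b * (b * y)⁻¹ * y = 1 by field_simp, mul_right_comm, ← div_eq_mul_inv,
    div_le_iff₀ hby] at h
  linarith

end NablaPrime

namespace IsYoung

theorem map_zero (hΦ : IsYoung Φ) : Φ 0 = 0 := (hΦ.2.2.1 0).2 rfl

theorem nonneg (hΦ : IsYoung Φ) (x : ℝ) : 0 ≤ Φ x := by
  have h := hΦ.2.1.2 (Set.mem_univ x) (Set.mem_univ (-x)) (by norm_num : (0 : ℝ) ≤ 1 / 2)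
    (by norm_num : (0 : ℝ) ≤ 1 / 2) (by norm_num)
  rw [smul_eq_mul, smul_eq_mul, show 1 / 2 * x + 1 / 2 * -x = 0 by ring, hΦ.map_zero,
    hΦ.2.2.2.1] at h
  simpa using h

theorem bddAbove_image (hΦ : IsYoung Φ) (y : ℝ) :
    BddAbove ((fun x => x * |y| - Φ x) '' Set.Ici 0) := by
  obtain ⟨M, hM⟩ := eventually_atTop.1 (hΦ.2.2.2.2.eventually_ge_atTop |y|)
  refine ⟨max M 0 * |y|, ?_⟩
  rintro _ ⟨x, -, rfl⟩
  change x * |y| - Φ x ≤ max M 0 * |y|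
  rcases le_or_gt x (max M 0) with hxM | hxM
  · linarith [hΦ.nonneg x, mul_le_mul_of_nonneg_right hxM (abs_nonneg y)]
  · have hx0 : 0 < x := lt_of_le_of_lt (le_max_right M 0) hxM
    have hxΦ : x * |y| ≤ Φ x := by
      rw [mul_comm, ← le_div_iff₀ hx0]
      exact hM x (le_max_left M 0 |>.trans hxM.le)
    nlinarith [abs_nonneg y, le_max_right M 0]

theorem le_complYoung (hΦ : IsYoung Φ) (y : ℝ) {x : ℝ} (hx : 0 ≤ x) :
    x * |y| - Φ x ≤ complYoung Φ y :=
  le_csSup (hΦ.bddAbove_image y) ⟨x, hx, rfl⟩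

theorem complYoung_nonneg (hΦ : IsYoung Φ) (y : ℝ) : 0 ≤ complYoung Φ y := by
  simpa [hΦ.map_zero] using hΦ.le_complYoung y le_rfl

theorem complYoung_zero (hΦ : IsYoung Φ) : complYoung Φ 0 = 0 :=
  le_antisymm (complYoung_le fun x _ => by simpa using hΦ.nonneg x) (hΦ.complYoung_nonneg 0)

theorem complYoung_le_apply (hΦ : IsYoung Φ) {u : ℝ} (hu : 0 < u) :
    complYoung Φ u ≤ Φ (2 * complYoung Φ u / u) := by
  have h := hΦ.le_complYoung u (x := 2 * complYoung Φ u / u)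
    (div_nonneg (mul_nonneg zero_le_two (hΦ.complYoung_nonneg u)) hu.le)
  rw [abs_of_pos hu, div_mul_cancel₀ _ hu.ne'] at h
  linarith

theorem complYoung_pos (hΦ : IsYoung Φ) (hN : NablaPrime Φ b) (hb : 0 < b) {u : ℝ} (hu : 0 < u) :
    0 < complYoung Φ u := by
  by_contra! h
  have hlin : ∀ x, 0 ≤ x → u * x ≤ Φ x := fun x hx => by
    have := hΦ.le_complYoung u hx
    rw [abs_of_pos hu] at this
    linarith
  obtain ⟨y, hy, hy0⟩ :=
    ((hΦ.2.2.2.2.eventually_gt_atTop (b * Φ 1 / u)).and (eventually_gt_atTop 0)).exists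
  have := hN.mul_apply_le_of_forall_mul_le hb hΦ.nonneg hlin hy0
  rw [div_lt_div_iff₀ hu hy0] at hy
  linarith

theorem complYoung_mul_le (hΦ : IsYoung Φ) (hN : NablaPrime Φ b) (hb : 0 < b) {u v : ℝ}
    (hu : 0 < u) (hv : 0 < v) :
    complYoung Φ (u * v) ≤ complYoung Φ (4 * b ^ 2) * complYoung Φ u * complYoung Φ v := by
  set A := complYoung Φ u
  set B := complYoung Φ v
  have hA : 0 < A := hΦ.complYoung_pos hN hb hu
  have hB : 0 < B := hΦ.complYoung_pos hN hb hv
  refine complYoung_le fun t ht => ?_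
  set w := t / (b ^ 2 * (2 * A / u) * (2 * B / v))
  have hw : 0 ≤ w := by positivity
  have hΦt : A * B * Φ w ≤ Φ t :=
    calc A * B * Φ w ≤ Φ (2 * A / u) * Φ (2 * B / v) * Φ w := by
          gcongr
          · exact hΦ.nonneg w
          · exact (hA.trans_le (hΦ.complYoung_le_apply hu)).le
          · exact hΦ.complYoung_le_apply hu
          · exact hΦ.complYoung_le_apply hv
      _ ≤ Φ (b ^ 2 * (2 * A / u) * (2 * B / v) * w) :=
          hN.mul_mul_le hb.le hΦ.nonneg (by positivity) (by positivity) hw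
      _ = Φ t := by unfold w; field_simp
  have htuv : t * (u * v) = 4 * b ^ 2 * A * B * w := by unfold w; field_simp; ring
  calc t * |u * v| - Φ t ≤ A * B * (w * |4 * b ^ 2| - Φ w) := by
        rw [abs_of_pos (mul_pos hu hv), abs_of_pos (by positivity)]
        nlinarith
    _ ≤ A * B * complYoung Φ (4 * b ^ 2) := by gcongr; exact hΦ.le_complYoung _ hw
    _ = complYoung Φ (4 * b ^ 2) * A * B := by ring

end IsYoung

end

/-- If a Young's function `Φ` satisfies the `∇'` condition globally
(`Φ(bxy) ≥ Φ(x)Φ(y)` for all `x, y ≥ 0` and some `b > 0`), then its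
complementary function `Φ*` satisfies the `Δ'` condition:
`Φ*(xy) ≤ c Φ*(x) Φ*(y)` for `x, y ≥ 0`. -/
theorem young_nablaPrime_implies_compl_deltaPrime (Φ : ℝ → ℝ) (hΦ : IsYoung Φ)
    (hNabla : ∃ b : ℝ, 0 < b ∧ ∀ x y : ℝ, 0 ≤ x → 0 ≤ y → Φ x * Φ y ≤ Φ (b * x * y)) :
    ∃ c : ℝ, 0 < c ∧ ∀ x y : ℝ, 0 ≤ x → 0 ≤ y →
      complYoung Φ (x * y) ≤ c * complYoung Φ x * complYoung Φ y := by
  obtain ⟨b, hb, hN⟩ := hNabla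
  refine ⟨complYoung Φ (4 * b ^ 2), hΦ.complYoung_pos hN hb (by positivity), fun x y hx hy => ?_⟩
  rcases (mul_nonneg hx hy).eq_or_lt with hxy | hxy
  · rw [← hxy, hΦ.complYoung_zero]
    exact mul_nonneg (mul_nonneg (hΦ.complYoung_nonneg _) (hΦ.complYoung_nonneg x))
      (hΦ.complYoung_nonneg y)
  · exact hΦ.complYoung_mul_le hN hb (pos_of_mul_pos_left hxy hy) (pos_of_mul_pos_right hxy hx)
end

section
/- Let (Ω,Σ,μ) be a non-atomic σ-finite measure space, 𝒜 = Σ, and 1 < p < q < ∞. Then the only bounded multiplication operator M_u : L^p(μ) → L^q(μ), M_u(f) = uf, is M_u = 0 (i.e., u = 0 a.e.). -/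
/-! If `‖u‖ ≥ ε > 0` on a set of positive measure, non-atomicity and σ-finiteness provide
subsets `B` of it of arbitrarily small positive measure. Testing the bound on `𝟙_B` gives
`ε μ(B)^(1/q) ≤ C μ(B)^(1/p)`, i.e. `ε ≤ C μ(B)^(1/p - 1/q)`, which fails once `μ(B)` is small
because `1/p > 1/q`. -/

open MeasureTheory

/-- A measure is non-atomic if every set of positive measure has a measurable
subset of strictly smaller positive measure. -/
def NonAtomic {Ω : Type*} {mΩ : MeasurableSpace Ω} (μ : Measure Ω) : Prop :=
  ∀ A : Set Ω, MeasurableSet A → 0 < μ A →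
    ∃ B : Set Ω, MeasurableSet B ∧ B ⊆ A ∧ 0 < μ B ∧ μ B < μ A

open Filter Topology
open scoped ENNReal

namespace NonAtomic

variable {Ω : Type*} {mΩ : MeasurableSpace Ω} {μ : Measure Ω}

lemma exists_subset_measure_pos_le_half (hna : NonAtomic μ) {A : Set Ω} (hA : MeasurableSet A)
    (hA₀ : 0 < μ A) (hA_top : μ A ≠ ∞) :
    ∃ B ⊆ A, MeasurableSet B ∧ 0 < μ B ∧ μ B ≤ μ A / 2 := by
  obtain ⟨B, hB, hBA, hB₀, hBlt⟩ := hna A hA hA₀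
  by_cases hB_half : μ B ≤ μ A / 2
  · exact ⟨B, hBA, hB, hB₀, hB_half⟩
  -- otherwise the complement of `B` in `A` is the smaller half
  have hdiff : μ (A \ B) = μ A - μ B :=
    measure_sdiff hBA hB.nullMeasurableSet (hBlt.trans_le le_top).ne
  refine ⟨A \ B, Set.sdiff_subset, hA.diff hB, ?_, ?_⟩
  · rw [hdiff]
    exact tsub_pos_of_lt hBlt
  · calc μ (A \ B) = μ A - μ B := hdiff
      _ ≤ μ A - μ A / 2 := tsub_le_tsub_left (not_le.1 hB_half).le _
      _ = μ A / 2 := ENNReal.sub_half hA_top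

lemma exists_subset_measure_pos_le_inv_two_pow (hna : NonAtomic μ) {A : Set Ω}
    (hA : MeasurableSet A) (hA₀ : 0 < μ A) (hA_top : μ A ≠ ∞) (n : ℕ) :
    ∃ B ⊆ A, MeasurableSet B ∧ 0 < μ B ∧ μ B ≤ μ A * 2⁻¹ ^ n := by
  induction n with
  | zero => exact ⟨A, subset_rfl, hA, hA₀, by simp⟩
  | succ n ih =>
    obtain ⟨B, hBA, hB, hB₀, hB_le⟩ := ih
    have hB_top : μ B ≠ ∞ := ne_top_of_le_ne_top hA_top (measure_mono hBA)
    obtain ⟨B', hB'B, hB', hB'₀, hB'_le⟩ :=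
      hna.exists_subset_measure_pos_le_half hB hB₀ hB_top
    refine ⟨B', hB'B.trans hBA, hB', hB'₀, ?_⟩
    calc μ B' ≤ μ B / 2 := hB'_le
      _ ≤ μ A * 2⁻¹ ^ n / 2 := ENNReal.div_le_div_right hB_le 2
      _ = μ A * 2⁻¹ ^ (n + 1) := by rw [div_eq_mul_inv, pow_succ, mul_assoc]

lemma exists_subset_measure_pos_lt [SigmaFinite μ] (hna : NonAtomic μ) {A : Set Ω}
    (hA : MeasurableSet A) (hA₀ : 0 < μ A) {δ : ℝ≥0∞} (hδ : 0 < δ) :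
    ∃ B ⊆ A, MeasurableSet B ∧ 0 < μ B ∧ μ B < δ := by
  obtain ⟨A', hA', hA'A, hA'₀, hA'_top⟩ := Measure.exists_subset_measure_lt_top hA hA₀
  obtain ⟨n, hn⟩ := ENNReal.exists_inv_two_pow_lt (ENNReal.div_pos hδ.ne' hA'_top.ne).ne'
  obtain ⟨B, hBA', hB, hB₀, hB_le⟩ :=
    hna.exists_subset_measure_pos_le_inv_two_pow hA' hA'₀ hA'_top.ne n
  refine ⟨B, hBA'.trans hA'A, hB, hB₀, hB_le.trans_lt ?_⟩
  calc μ A' * 2⁻¹ ^ n < μ A' * (δ / μ A') := ENNReal.mul_lt_mul_right hA'₀.ne' hA'_top.ne hn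
    _ ≤ δ := ENNReal.mul_div_le

end NonAtomic

section MulOperator

variable {Ω : Type*} {mΩ : MeasurableSpace Ω} {μ : Measure Ω}

lemma mul_rpow_le_eLpNorm_indicator {E : Type*} [NormedAddCommGroup E] {u : Ω → E}
    {B : Set Ω} (hB : MeasurableSet B) (hμB : μ B ≠ 0) {q : ℝ≥0∞} (hq : q ≠ 0) {ε : ℝ≥0∞}
    (hεu : ∀ᵐ x ∂μ, x ∈ B → ε ≤ ‖u x‖ₑ) :
    ε * μ B ^ (1 / q.toReal) ≤ eLpNorm (B.indicator u) q μ := by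
  calc ε * μ B ^ (1 / q.toReal) = eLpNorm (B.indicator fun _ ↦ ε) q μ := by
        rw [eLpNorm_indicator_const' hB hμB hq, enorm_eq_self]
    _ ≤ eLpNorm (B.indicator u) q μ := by
        refine eLpNorm_mono_enorm_ae ?_
        filter_upwards [hεu] with x hx
        by_cases hxB : x ∈ B
        · simpa [Set.indicator_of_mem hxB] using hx hxB
        · simp [Set.indicator_of_notMem hxB]

variable {𝕜 : Type*} [NormedRing 𝕜] [NormOneClass 𝕜] {u : Ω → 𝕜} {p q C : ℝ≥0∞}

lemma le_mul_rpow_of_eLpNorm_mul_le (hp : p ≠ 0) (hpq : p < q)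
    (hbdd : ∀ f : Ω → 𝕜, MemLp f p μ → eLpNorm (fun x ↦ u x * f x) q μ ≤ C * eLpNorm f p μ)
    {B : Set Ω} (hB : MeasurableSet B) (hμB₀ : μ B ≠ 0) (hμB_top : μ B ≠ ∞) {ε : ℝ≥0∞}
    (hεu : ∀ᵐ x ∂μ, x ∈ B → ε ≤ ‖u x‖ₑ) :
    ε ≤ C * μ B ^ (1 / p.toReal - 1 / q.toReal) := by
  have hq : q ≠ 0 := (pos_iff_ne_zero.2 hp |>.trans hpq).ne'
  have hq_pos : 0 < μ B ^ (1 / q.toReal) := ENNReal.rpow_pos (pos_iff_ne_zero.2 hμB₀) hμB_top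
  have hq_top : μ B ^ (1 / q.toReal) ≠ ∞ := ENNReal.rpow_ne_top_of_nonneg (by positivity) hμB_top
  refine (ENNReal.mul_le_mul_iff_left hq_pos.ne' hq_top).1 ?_
  calc ε * μ B ^ (1 / q.toReal) ≤ eLpNorm (B.indicator u) q μ :=
        mul_rpow_le_eLpNorm_indicator hB hμB₀ hq hεu
    _ = eLpNorm (fun x ↦ u x * B.indicator 1 x) q μ := by
        simp_rw [← Set.indicator_mul_right, Pi.one_apply, mul_one]
    _ ≤ C * eLpNorm (B.indicator fun _ ↦ (1 : 𝕜)) p μ :=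
        hbdd _ (memLp_indicator_const p hB 1 (Or.inr hμB_top))
    _ = C * μ B ^ (1 / p.toReal) := by
        rw [eLpNorm_indicator_const hB hp hpq.ne_top, enorm_one, one_mul]
    _ = C * μ B ^ (1 / p.toReal - 1 / q.toReal) * μ B ^ (1 / q.toReal) := by
        rw [mul_assoc, ← ENNReal.rpow_add _ _ hμB₀ hμB_top, sub_add_cancel]

lemma one_div_toReal_sub_one_div_toReal_pos (hp : p ≠ 0) (hpq : p < q) :
    0 < 1 / p.toReal - 1 / q.toReal := by
  have hp_pos : 0 < p.toReal := ENNReal.toReal_pos hp hpq.ne_top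
  rcases eq_or_ne q ∞ with rfl | hq_top
  · simpa using hp_pos
  · exact sub_pos.2 <| one_div_lt_one_div_of_lt hp_pos <|
      (ENNReal.toReal_lt_toReal hpq.ne_top hq_top).2 hpq

lemma NonAtomic.measure_eq_zero_of_eLpNorm_mul_le [SigmaFinite μ] (hna : NonAtomic μ)
    (hp : p ≠ 0) (hpq : p < q) (hC : C ≠ ∞)
    (hbdd : ∀ f : Ω → 𝕜, MemLp f p μ → eLpNorm (fun x ↦ u x * f x) q μ ≤ C * eLpNorm f p μ)
    {S : Set Ω} (hS : MeasurableSet S) {ε : ℝ≥0∞} (hε : ε ≠ 0)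
    (hεu : ∀ᵐ x ∂μ, x ∈ S → ε ≤ ‖u x‖ₑ) :
    μ S = 0 := by
  by_contra hS₀
  set θ := 1 / p.toReal - 1 / q.toReal
  have hθ : 0 < θ := one_div_toReal_sub_one_div_toReal_pos hp hpq
  -- the conjunct `t < 1` only serves to make the chosen set of finite measure
  obtain ⟨δ, hδ, hδε⟩ : ∃ δ > 0, ∀ t < δ, C * t ^ θ < ε ∧ t < 1 := by
    have hlim : Tendsto (fun t : ℝ≥0∞ ↦ C * t ^ θ) (𝓝 0) (𝓝 0) := by
      simpa [ENNReal.zero_rpow_of_pos hθ] using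
        ENNReal.Tendsto.const_mul ((ENNReal.continuous_rpow_const (y := θ)).tendsto 0) (Or.inr hC)
    exact ENNReal.nhds_zero_basis.eventually_iff.1
      ((hlim.eventually (gt_mem_nhds (pos_iff_ne_zero.2 hε))).and (gt_mem_nhds one_pos))
  obtain ⟨B, hBS, hB, hB₀, hBδ⟩ :=
    hna.exists_subset_measure_pos_lt hS (pos_iff_ne_zero.2 hS₀) hδ
  have hB_top : μ B ≠ ∞ := ((hδε _ hBδ).2.trans ENNReal.one_lt_top).ne
  exact (hδε _ hBδ).1.not_ge <| le_mul_rpow_of_eLpNorm_mul_le hp hpq hbdd hB hB₀.ne' hB_top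
    (hεu.mono fun x hx hxB ↦ hx (hBS hxB))

lemma ae_eq_zero_of_forall_measure_eq_zero_of_le_enorm {E : Type*} [NormedAddCommGroup E]
    {g : Ω → E} (hg : AEStronglyMeasurable g μ)
    (h : ∀ S, MeasurableSet S → ∀ ε : ℝ≥0∞, ε ≠ 0 → (∀ᵐ x ∂μ, x ∈ S → ε ≤ ‖g x‖ₑ) → μ S = 0) :
    g =ᵐ[μ] 0 := by
  have hnull : ∀ n : ℕ, μ {x | (n : ℝ≥0∞)⁻¹ ≤ ‖hg.mk g x‖ₑ} = 0 := fun n ↦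
    h _ (measurableSet_le measurable_const hg.stronglyMeasurable_mk.enorm) _
      (ENNReal.inv_ne_zero.2 (ENNReal.natCast_ne_top n))
      (hg.ae_eq_mk.mono fun x hx hxS ↦ hx ▸ hxS)
  refine hg.ae_eq_mk.trans ?_
  refine measure_mono_null (fun x hx ↦ ?_) (measure_iUnion_null hnull)
  obtain ⟨n, hn⟩ := ENNReal.exists_inv_nat_lt (enorm_ne_zero.2 hx)
  exact Set.mem_iUnion.2 ⟨n, hn.le⟩

end MulOperator

/-- On a non-atomic σ-finite measure space, for `1 < p < q < ∞`, the only bounded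
multiplication operator `M_u : L^p(μ) → L^q(μ)` is `M_u = 0`, i.e. `u = 0` a.e. -/
theorem mul_op_Lp_Lq_nonatomic_zero {Ω : Type*} {mΩ : MeasurableSpace Ω}
    {μ : Measure Ω} [SigmaFinite μ] (hna : NonAtomic μ)
    (p q : ℝ) (hp : 1 < p) (hpq : p < q)
    (u : Ω → ℝ) (hu : AEStronglyMeasurable u μ)
    (hbdd : ∃ C : ℝ, 0 ≤ C ∧ ∀ f : Ω → ℝ, MemLp f (ENNReal.ofReal p) μ →
      eLpNorm (fun x => u x * f x) (ENNReal.ofReal q) μ ≤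
        ENNReal.ofReal C * eLpNorm f (ENNReal.ofReal p) μ) :
    u =ᵐ[μ] 0 := by
  obtain ⟨C, -, hC⟩ := hbdd
  have hp₀ : ENNReal.ofReal p ≠ 0 := ENNReal.ofReal_ne_zero_iff.2 (by linarith)
  have hpq' : ENNReal.ofReal p < ENNReal.ofReal q :=
    ENNReal.ofReal_lt_ofReal_iff'.2 ⟨hpq, by linarith⟩
  exact ae_eq_zero_of_forall_measure_eq_zero_of_le_enorm hu fun S hS ε hε hεu ↦
    hna.measure_eq_zero_of_eLpNorm_mul_le hp₀ hpq' ENNReal.ofReal_ne_top hC hS hε hεu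
end

section
/- Let Ω = (⋃ₙ Aₙ) ∪ B be the atomic/non-atomic decomposition of a σ-finite measure space, 𝒜 = Σ (so E is the identity), and 1 < p < q < ∞. The multiplication operator M_u : L^p → L^q is bounded if and only if u = 0 a.e. on B and sup_n |u(Aₙ)| / μ(Aₙ)^{1/q' − 1/p'} < ∞, where u(Aₙ) is the (a.e. constant) value of u on the atom Aₙ. -/
/-!
Testing the operator on indicators `1_T` gives `‖u‖_{L^q(T)} ≤ C μ(T)^{1/p}`. On an atom `u` is
the constant `c n`, which yields `|c n| ≤ C μ(Aₙ)^{1/p - 1/q}`. Inside `B ∩ {|u| > ε}` there are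
subsets `T` of arbitrarily small positive measure, and `ε μ(T)^{1/q} ≤ C μ(T)^{1/p}` with
`1/p - 1/q > 0` is then impossible, so `u = 0` a.e. on `B`. Conversely, every `f ∈ L^p` is
constant on each atom, so `‖u f‖_q` is the `ℓ^q` norm of the pieces `‖u f‖_{L^q(Aₙ)}`, each at most
`M ‖f‖_{L^p(Aₙ)}`, and the `ℓ^q` norm is dominated by the `ℓ^p` norm for `p ≤ q`.
-/

open MeasureTheory

/-- An atom of `μ`: a measurable set `A` with `μ(A) > 0` such that every
measurable subset of `A` has measure `0` or `μ(A)`. -/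
def IsAtomSet {Ω : Type*} {mΩ : MeasurableSpace Ω} (μ : Measure Ω) (A : Set Ω) : Prop :=
  MeasurableSet A ∧ 0 < μ A ∧
    ∀ F : Set Ω, MeasurableSet F → F ⊆ A → μ F = 0 ∨ μ F = μ A

/-- A measure is non-atomic on a set `B` if no measurable subset of `B` is an atom. -/
def NonAtomicOn {Ω : Type*} {mΩ : MeasurableSpace Ω} (μ : Measure Ω) (B : Set Ω) : Prop :=
  ∀ S : Set Ω, MeasurableSet S → S ⊆ B → ¬ IsAtomSet μ S

open Filter
open scoped ENNReal

namespace ENNReal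

theorem tsum_rpow_le_rpow_tsum {ι : Type*} (b : ι → ℝ≥0∞) {s : ℝ} (hs : 1 ≤ s) :
    ∑' i, b i ^ s ≤ (∑' i, b i) ^ s := by
  have hsplit : ∀ x : ℝ≥0∞, x ^ s = x * x ^ (s - 1) := fun x => by
    conv_lhs => rw [show s = 1 + (s - 1) by ring]
    rw [rpow_add_of_nonneg _ _ zero_le_one (by linarith), rpow_one]
  calc ∑' i, b i ^ s = ∑' i, b i * b i ^ (s - 1) := by simp only [← hsplit]
    _ ≤ ∑' i, b i * (∑' j, b j) ^ (s - 1) := by gcongr with i; exact ENNReal.le_tsum i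
    _ = (∑' i, b i) ^ s := by rw [ENNReal.tsum_mul_right, ← hsplit]

theorem tsum_rpow_rpow_one_div_le_of_le {ι : Type*} (x : ι → ℝ≥0∞) {p q : ℝ} (hp : 0 < p)
    (hpq : p ≤ q) : (∑' i, x i ^ q) ^ (1 / q) ≤ (∑' i, x i ^ p) ^ (1 / p) := by
  have hq : 0 < q := hp.trans_le hpq
  calc (∑' i, x i ^ q) ^ (1 / q) = (∑' i, (x i ^ p) ^ (q / p)) ^ (1 / q) := by
        simp only [← rpow_mul, mul_div_cancel₀ q hp.ne']
    _ ≤ ((∑' i, x i ^ p) ^ (q / p)) ^ (1 / q) := by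
        gcongr
        exact tsum_rpow_le_rpow_tsum _ ((one_le_div hp).mpr hpq)
    _ = (∑' i, x i ^ p) ^ (1 / p) := by
        rw [← rpow_mul]; congr 1; field_simp

theorem ofReal_mul_rpow_le_ofReal_mul_rpow_iff {x C a b : ℝ} {T : ℝ≥0∞} (hC : 0 ≤ C)
    (hT0 : T ≠ 0) (hT : T ≠ ∞) :
    ENNReal.ofReal x * T ^ a ≤ ENNReal.ofReal C * T ^ b ↔ x ≤ C * T.toReal ^ (b - a) := by
  obtain ⟨t, ht, rfl⟩ : ∃ t, 0 < t ∧ T = ENNReal.ofReal t :=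
    ⟨T.toReal, toReal_pos hT0 hT, (ofReal_toReal hT).symm⟩
  rw [toReal_ofReal ht.le, ofReal_rpow_of_pos ht, ofReal_rpow_of_pos ht,
    ← ofReal_mul' (by positivity), ← ofReal_mul' (by positivity),
    ofReal_le_ofReal_iff (by positivity), Real.rpow_sub ht, mul_div_assoc',
    le_div_iff₀ (by positivity)]

end ENNReal

section

variable {Ω : Type*} {mΩ : MeasurableSpace Ω} {μ : Measure Ω}

namespace IsAtomSet

variable {A : Set Ω}

theorem measure_lt_top [SigmaFinite μ] (hA : IsAtomSet μ A) : μ A < ∞ := by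
  obtain ⟨t, htm, htA, ht0, htt⟩ := Measure.exists_subset_measure_lt_top hA.1 hA.2.1
  rcases hA.2.2 t htm htA with h | h
  · exact absurd h ht0.ne'
  · exact h ▸ htt

/-- Every measurable set is null or conull for `μ.restrict A`, i.e. the identity is ergodic;
Mathlib's ergodic theory then makes every function a.e. constant on `A`. -/
theorem quasiErgodic_id (hA : IsAtomSet μ A) (hAt : μ A ≠ ∞) :
    QuasiErgodic id (μ.restrict A) where
  toQuasiMeasurePreserving := .id _
  aeconst_set s hs _ := by
    rw [eventuallyConst_set', ae_eq_empty, ae_eq_univ, Measure.restrict_apply hs,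
      Measure.restrict_apply hs.compl]
    refine (hA.2.2 _ (hs.inter hA.1) Set.inter_subset_right).imp_right fun h => ?_
    rw [← Set.sdiff_eq_compl_inter, ← Set.sdiff_inter_self_eq_sdiff,
      measure_sdiff Set.inter_subset_right (hs.inter hA.1).nullMeasurableSet (h ▸ hAt), h,
      tsub_self]

theorem exists_ae_eq_const {X : Type*} [TopologicalSpace X] [TopologicalSpace.MetrizableSpace X]
    [Nonempty X] (hA : IsAtomSet μ A) (hAt : μ A ≠ ∞) {f : Ω → X}
    (hf : AEStronglyMeasurable f (μ.restrict A)) : ∃ a, ∀ᵐ x ∂μ.restrict A, f x = a :=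
  (hA.quasiErgodic_id hAt).ae_eq_const_of_ae_eq_comp_ae hf (by rfl)

end IsAtomSet

theorem exists_subset_measure_pos_le_half {T : Set Ω} (hT : MeasurableSet T) (hT0 : 0 < μ T)
    (hna : ¬ IsAtomSet μ T) : ∃ F ⊆ T, MeasurableSet F ∧ 0 < μ F ∧ μ F ≤ μ T / 2 := by
  simp only [IsAtomSet, hT, hT0, true_and, not_forall, not_or] at hna
  obtain ⟨F, hF, hFT, hF0, hFT'⟩ := hna
  have hsum : μ F + μ (T \ F) = μ T := by
    rw [measure_add_sdiff hF.nullMeasurableSet, Set.union_eq_self_of_subset_left hFT]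
  have hdiff0 : μ (T \ F) ≠ 0 := fun h => hFT' (by rw [← hsum, h, add_zero])
  by_cases hhalf : μ F ≤ μ T / 2
  · exact ⟨F, hFT, hF, pos_iff_ne_zero.mpr hF0, hhalf⟩
  · refine ⟨T \ F, Set.sdiff_subset, hT.diff hF, pos_iff_ne_zero.mpr hdiff0, ?_⟩
    by_contra hgt
    have := ENNReal.add_lt_add (not_le.mp hhalf) (not_le.mp hgt)
    rw [ENNReal.add_halves, hsum] at this
    exact lt_irrefl _ this

theorem NonAtomicOn.mono {S B : Set Ω} (hB : NonAtomicOn μ B) (hSB : S ⊆ B) : NonAtomicOn μ S :=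
  fun T hT hTS => hB T hT (hTS.trans hSB)

theorem NonAtomicOn.exists_subset_measure_pos_lt [SigmaFinite μ] {S : Set Ω}
    (hna : NonAtomicOn μ S) (hS : MeasurableSet S) (hS0 : 0 < μ S) {ε : ℝ≥0∞} (hε : 0 < ε) :
    ∃ T ⊆ S, MeasurableSet T ∧ 0 < μ T ∧ μ T < ε := by
  obtain ⟨t, ht, htS, ht0, htt⟩ := Measure.exists_subset_measure_lt_top hS hS0
  have halving : ∀ n : ℕ, ∃ T ⊆ t, MeasurableSet T ∧ 0 < μ T ∧ μ T ≤ μ t * 2⁻¹ ^ n := by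
    intro n
    induction n with
    | zero => exact ⟨t, subset_rfl, ht, ht0, by simp⟩
    | succ n ih =>
      obtain ⟨T, hTt, hT, hT0, hTle⟩ := ih
      obtain ⟨F, hFT, hF, hF0, hFle⟩ :=
        exists_subset_measure_pos_le_half hT hT0 (hna T hT (hTt.trans htS))
      refine ⟨F, hFT.trans hTt, hF, hF0, hFle.trans ?_⟩
      rw [pow_succ, ← mul_assoc, ← div_eq_mul_inv]
      gcongr
  obtain ⟨n, hn⟩ := ENNReal.exists_inv_two_pow_lt (ENNReal.div_pos hε.ne' htt.ne).ne'
  obtain ⟨T, hTt, hT, hT0, hTle⟩ := halving n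
  refine ⟨T, hTt.trans htS, hT, hT0, hTle.trans_lt ?_⟩
  calc μ t * 2⁻¹ ^ n < μ t * (ε / μ t) := (ENNReal.mul_lt_mul_iff_right ht0.ne' htt.ne).mpr hn
    _ = ε := ENNReal.mul_div_cancel ht0.ne' htt.ne

section MulOperator

variable {u : Ω → ℝ} {p q C : ℝ}

theorem abs_le_mul_measure_rpow_of_eLpNorm_mul_le (hp : 0 < p) (hq : 0 < q) (hC0 : 0 ≤ C)
    (hC : ∀ f : Ω → ℝ, MemLp f (ENNReal.ofReal p) μ →
      eLpNorm (fun x => u x * f x) (ENNReal.ofReal q) μ ≤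
        ENNReal.ofReal C * eLpNorm f (ENNReal.ofReal p) μ)
    {T : Set Ω} (hT : MeasurableSet T) (hT0 : μ T ≠ 0) (hTt : μ T ≠ ∞) {x : ℝ}
    (hx : ∀ᵐ y ∂μ.restrict T, |x| ≤ |u y|) : |x| ≤ C * (μ T).toReal ^ (1 / p - 1 / q) := by
  have hP0 : ENNReal.ofReal p ≠ 0 := ENNReal.ofReal_ne_zero_iff.mpr hp
  have hQ0 : ENNReal.ofReal q ≠ 0 := ENNReal.ofReal_ne_zero_iff.mpr hq
  have hbound := hC _ (memLp_indicator_const _ hT (1 : ℝ) (Or.inr hTt))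
  have hmul : (fun y => u y * T.indicator (fun _ => (1 : ℝ)) y) = T.indicator u := by
    ext y; by_cases hy : y ∈ T <;> simp [hy]
  rw [hmul, eLpNorm_indicator_eq_eLpNorm_restrict hT,
    eLpNorm_indicator_const hT hP0 ENNReal.ofReal_ne_top, ENNReal.toReal_ofReal hp.le, enorm_one,
    one_mul] at hbound
  have hconst : eLpNorm (fun _ => x) (ENNReal.ofReal q) (μ.restrict T) ≤
      eLpNorm u (ENNReal.ofReal q) (μ.restrict T) :=
    eLpNorm_mono_ae (by simpa only [Real.norm_eq_abs] using hx)
  rw [eLpNorm_const _ hQ0 (by simpa using hT0), Measure.restrict_apply_univ,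
    ENNReal.toReal_ofReal hq.le, Real.enorm_eq_ofReal_abs] at hconst
  exact (ENNReal.ofReal_mul_rpow_le_ofReal_mul_rpow_iff hC0 hT0 hTt).mp (hconst.trans hbound)

theorem NonAtomicOn.ae_restrict_eq_zero_of_eLpNorm_mul_le [SigmaFinite μ] {B : Set Ω}
    (hna : NonAtomicOn μ B) (hB : MeasurableSet B) (hp : 0 < p) (hpq : p < q) (hC0 : 0 ≤ C)
    (hC : ∀ f : Ω → ℝ, MemLp f (ENNReal.ofReal p) μ →
      eLpNorm (fun x => u x * f x) (ENNReal.ofReal q) μ ≤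
        ENNReal.ofReal C * eLpNorm f (ENNReal.ofReal p) μ)
    (hu : AEStronglyMeasurable u μ) : ∀ᵐ x ∂μ.restrict B, u x = 0 := by
  obtain ⟨g, hg, hug⟩ := hu
  suffices hg0 : ∀ᵐ x ∂μ.restrict B, g x = 0 from
    (ae_restrict_of_ae hug).mp (hg0.mono fun x h0 hx => hx.trans h0)
  have hr : 0 < 1 / p - 1 / q := sub_pos.mpr (one_div_lt_one_div_of_lt hp hpq)
  have hlevel : ∀ ε > 0, μ (B ∩ {x | ε < |g x|}) = 0 := by
    intro ε hε
    obtain ⟨δ, hδ, hsmall⟩ : ∃ δ > 0, ∀ ⦃t : ℝ⦄, dist t 0 < δ → C * t ^ (1 / p - 1 / q) < ε := by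
      have hcont := ((Real.continuousAt_rpow_const 0 _ (Or.inr hr.le)).const_mul C).tendsto
      rw [Real.zero_rpow hr.ne', mul_zero] at hcont
      exact Metric.eventually_nhds_iff.mp (hcont.eventually_lt_const hε)
    by_contra hS0
    have hS : MeasurableSet (B ∩ {x | ε < |g x|}) :=
      hB.inter (measurableSet_lt measurable_const hg.measurable.abs)
    obtain ⟨T, hTS, hT, hT0, hTδ⟩ := (hna.mono Set.inter_subset_left).exists_subset_measure_pos_lt
      hS (pos_iff_ne_zero.mpr hS0) (ENNReal.ofReal_pos.mpr hδ)
    have hεu : ∀ᵐ y ∂μ.restrict T, |ε| ≤ |u y| := by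
      filter_upwards [ae_restrict_mem hT, ae_restrict_of_ae hug] with y hyT hy
      rw [hy, abs_of_pos hε]
      exact (hTS hyT).2.le
    have hTδ' : dist (μ T).toReal 0 < δ := by
      rw [Real.dist_0_eq_abs, abs_of_nonneg ENNReal.toReal_nonneg]
      exact ENNReal.toReal_lt_of_lt_ofReal hTδ
    have := abs_le_mul_measure_rpow_of_eLpNorm_mul_le hp (hp.trans hpq) hC0 hC hT hT0.ne'
      (ne_top_of_lt hTδ) hεu
    linarith [abs_of_pos hε, hsmall hTδ']
  rw [ae_iff, Measure.restrict_apply' hB]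
  refine measure_mono_null (fun x hx => ?_)
    (measure_iUnion_null fun n : ℕ => hlevel (1 / (n + 1)) (by positivity))
  obtain ⟨n, hn⟩ := exists_nat_one_div_lt (abs_pos.mpr hx.1)
  exact Set.mem_iUnion.mpr ⟨n, hx.2, hn⟩

theorem eLpNorm_restrict_iUnion {ι E : Type*} [Countable ι] [ENorm E] {g : Ω → E} {P : ℝ≥0∞}
    (hP0 : P ≠ 0) (hP : P ≠ ∞) {A : ι → Set Ω} (hA : ∀ i, MeasurableSet (A i))
    (hdisj : Pairwise (Function.onFun Disjoint A)) :
    eLpNorm g P (μ.restrict (⋃ i, A i)) =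
      (∑' i, eLpNorm g P (μ.restrict (A i)) ^ P.toReal) ^ (1 / P.toReal) := by
  have hP' : P.toReal ≠ 0 := (ENNReal.toReal_pos hP0 hP).ne'
  simp only [eLpNorm_eq_eLpNorm' hP0 hP, eLpNorm', lintegral_iUnion hA hdisj, ← ENNReal.rpow_mul,
    one_div_mul_cancel hP', ENNReal.rpow_one]

theorem IsAtomSet.eLpNorm_mul_le (hp : 0 < p) (hq : 0 < q) {A : Set Ω} (hA : IsAtomSet μ A)
    (hAt : μ A ≠ ∞) {c M : ℝ} (hM0 : 0 ≤ M) (hu : ∀ᵐ x ∂μ.restrict A, u x = c)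
    (hc : |c| ≤ M * (μ A).toReal ^ (1 / p - 1 / q)) {f : Ω → ℝ}
    (hf : AEStronglyMeasurable f (μ.restrict A)) :
    eLpNorm (fun x => u x * f x) (ENNReal.ofReal q) (μ.restrict A) ≤
      ENNReal.ofReal M * eLpNorm f (ENNReal.ofReal p) (μ.restrict A) := by
  obtain ⟨a, hfa⟩ := hA.exists_ae_eq_const hAt hf
  have hμA : μ.restrict A ≠ 0 := by simpa using hA.2.1.ne'
  have hcA := (ENNReal.ofReal_mul_rpow_le_ofReal_mul_rpow_iff hM0 hA.2.1.ne' hAt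
    (a := 1 / q) (b := 1 / p)).mpr hc
  have hmul : (fun x => u x * f x) =ᵐ[μ.restrict A] fun _ => c * a := by
    filter_upwards [hu, hfa] with x hux hfx
    rw [hux, hfx]
  rw [eLpNorm_congr_ae hmul, eLpNorm_congr_ae (g := fun _ => a) hfa,
    eLpNorm_const _ (ENNReal.ofReal_ne_zero_iff.mpr hq) hμA,
    eLpNorm_const _ (ENNReal.ofReal_ne_zero_iff.mpr hp) hμA, Measure.restrict_apply_univ,
    ENNReal.toReal_ofReal hp.le, ENNReal.toReal_ofReal hq.le,
    enorm_mul, Real.enorm_eq_ofReal_abs c]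
  calc ENNReal.ofReal |c| * ‖a‖ₑ * μ A ^ (1 / q)
      = ‖a‖ₑ * (ENNReal.ofReal |c| * μ A ^ (1 / q)) := by ring
    _ ≤ ‖a‖ₑ * (ENNReal.ofReal M * μ A ^ (1 / p)) := mul_le_mul_right hcA _
    _ = ENNReal.ofReal M * (‖a‖ₑ * μ A ^ (1 / p)) := by ring

theorem eLpNorm_mul_le_of_forall_isAtomSet {ι : Type*} [Countable ι] (hp : 0 < p) (hpq : p ≤ q)
    {A : ι → Set Ω} (hA : ∀ i, IsAtomSet μ (A i)) (hAt : ∀ i, μ (A i) ≠ ∞)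
    (hdisj : Pairwise (Function.onFun Disjoint A)) (hu0 : ∀ᵐ x ∂μ.restrict (⋃ i, A i)ᶜ, u x = 0)
    {c : ι → ℝ} (hc : ∀ i, ∀ᵐ x ∂μ.restrict (A i), u x = c i) {M : ℝ} (hM0 : 0 ≤ M)
    (hM : ∀ i, |c i| ≤ M * (μ (A i)).toReal ^ (1 / p - 1 / q)) {f : Ω → ℝ}
    (hf : AEStronglyMeasurable f μ) :
    eLpNorm (fun x => u x * f x) (ENNReal.ofReal q) μ ≤
      ENNReal.ofReal M * eLpNorm f (ENNReal.ofReal p) μ := by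
  have hq : 0 < q := hp.trans_le hpq
  have hAm : ∀ i, MeasurableSet (A i) := fun i => (hA i).1
  have hU : MeasurableSet (⋃ i, A i) := .iUnion hAm
  have hP0 : ENNReal.ofReal p ≠ 0 := ENNReal.ofReal_ne_zero_iff.mpr hp
  have hQ0 : ENNReal.ofReal q ≠ 0 := ENNReal.ofReal_ne_zero_iff.mpr hq
  set e : ι → ℝ≥0∞ := fun i => eLpNorm f (ENNReal.ofReal p) (μ.restrict (A i))
  have hvanish : (⋃ i, A i).indicator (fun x => u x * f x) =ᵐ[μ] fun x => u x * f x :=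
    indicator_ae_eq_of_restrict_compl_ae_eq_zero hU (hu0.mono fun x hx => by simp [hx])
  calc eLpNorm (fun x => u x * f x) (ENNReal.ofReal q) μ
      = (∑' i, eLpNorm (fun x => u x * f x) (ENNReal.ofReal q) (μ.restrict (A i)) ^ q)
          ^ (1 / q) := by
        rw [← eLpNorm_congr_ae hvanish, eLpNorm_indicator_eq_eLpNorm_restrict hU,
          eLpNorm_restrict_iUnion hQ0 ENNReal.ofReal_ne_top hAm hdisj, ENNReal.toReal_ofReal hq.le]
    _ ≤ (∑' i, (ENNReal.ofReal M * e i) ^ q) ^ (1 / q) := by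
        gcongr with i
        exact (hA i).eLpNorm_mul_le hp hq (hAt i) hM0 (hc i) (hM i) hf.restrict
    _ ≤ (∑' i, (ENNReal.ofReal M * e i) ^ p) ^ (1 / p) :=
        ENNReal.tsum_rpow_rpow_one_div_le_of_le _ hp hpq
    _ = ENNReal.ofReal M * (∑' i, e i ^ p) ^ (1 / p) := by
        simp only [ENNReal.mul_rpow_of_nonneg _ _ hp.le, ENNReal.tsum_mul_left]
        rw [ENNReal.mul_rpow_of_nonneg _ _ (by positivity), ← ENNReal.rpow_mul,
          mul_one_div_cancel hp.ne', ENNReal.rpow_one]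
    _ = ENNReal.ofReal M * eLpNorm f (ENNReal.ofReal p) (μ.restrict (⋃ i, A i)) := by
        rw [eLpNorm_restrict_iUnion hP0 ENNReal.ofReal_ne_top hAm hdisj,
          ENNReal.toReal_ofReal hp.le]
    _ ≤ ENNReal.ofReal M * eLpNorm f (ENNReal.ofReal p) μ := by
        gcongr
        exact Measure.restrict_le_self

end MulOperator

end

/-- Remark 2.6 (case `𝒜 = Σ`): for `1 < p < q < ∞` and the decomposition
`Ω = (⋃ n, Aₙ) ∪ B` into atoms `Aₙ` and a non-atomic part `B`, the multiplication
operator `M_u : L^p → L^q` is bounded iff `u = 0` a.e. on `B` and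
`sup_n |u(Aₙ)| / μ(Aₙ)^{1/q' − 1/p'} < ∞`, where `c n = u(Aₙ)` is the a.e.
constant value of `u` on the atom `Aₙ` and `p', q'` are the conjugate exponents. -/
theorem mul_op_Lp_Lq_bounded_iff {Ω : Type*} {mΩ : MeasurableSpace Ω}
    {μ : Measure Ω} [SigmaFinite μ]
    (p q p' q' : ℝ) (hp : 1 < p) (hpq : p < q)
    (hp' : p' = p / (p - 1)) (hq' : q' = q / (q - 1))
    (A : ℕ → Set Ω) (hA : ∀ n, IsAtomSet μ (A n))
    (hdisj : Pairwise (Function.onFun Disjoint A))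
    (B : Set Ω) (hB : B = Set.univ \ ⋃ n, A n) (hBna : NonAtomicOn μ B)
    (u : Ω → ℝ) (hu : AEStronglyMeasurable u μ)
    (c : ℕ → ℝ) (hc : ∀ n, ∀ᵐ x ∂(μ.restrict (A n)), u x = c n) :
    (∃ C : ℝ, 0 ≤ C ∧ ∀ f : Ω → ℝ, MemLp f (ENNReal.ofReal p) μ →
        eLpNorm (fun x => u x * f x) (ENNReal.ofReal q) μ ≤
          ENNReal.ofReal C * eLpNorm f (ENNReal.ofReal p) μ) ↔
      ((∀ᵐ x ∂(μ.restrict B), u x = 0) ∧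
        ∃ M : ℝ, ∀ n, |c n| ≤ M * (μ (A n)).toReal ^ (1 / q' - 1 / p')) := by
  have hp0 : 0 < p := zero_lt_one.trans hp
  have hq0 : 0 < q := hp0.trans hpq
  have hexp : 1 / q' - 1 / p' = 1 / p - 1 / q := by
    rw [hp', hq', one_div_div, one_div_div]
    field_simp
    ring
  have hAt : ∀ n, μ (A n) ≠ ∞ := fun n => (hA n).measure_lt_top.ne
  rw [← Set.compl_eq_univ_sdiff] at hB
  subst hB
  rw [hexp]
  constructor
  · rintro ⟨C, hC0, hC⟩
    refine ⟨hBna.ae_restrict_eq_zero_of_eLpNorm_mul_le (.compl (.iUnion fun n => (hA n).1)) hp0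
      hpq hC0 hC hu, C, fun n => ?_⟩
    exact abs_le_mul_measure_rpow_of_eLpNorm_mul_le hp0 hq0 hC0 hC (hA n).1 (hA n).2.1.ne' (hAt n)
      ((hc n).mono fun x hx => hx ▸ le_rfl)
  · rintro ⟨hu0, M, hM⟩
    have hM0 : 0 ≤ M := nonneg_of_mul_nonneg_left ((abs_nonneg _).trans (hM 0))
      (Real.rpow_pos_of_pos (ENNReal.toReal_pos (hA 0).2.1.ne' (hAt 0)) _)
    exact ⟨M, hM0, fun f hf => eLpNorm_mul_le_of_forall_isAtomSet hp0 hpq.le hA hAt hdisj hu0 hc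
      hM0 hM hf.1⟩
end
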